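/- There exists a commutative ring 𝕃 together with a formal group law F_𝕃 over 𝕃 which is universal: for every commutative ring R and every formal group law F over R, there is a unique ring homomorphism φ : 𝕃 → R such that applying φ to the coefficients of F_𝕃 yields F. -/

import Mathlib

open MvPowerSeries

/-- Substitution of the family `f` (each entry should have zero constant term)
into the multivariate power series `G`. The coefficient of a monomial `e` only
depends on the monomials of `G` of total degree at most the degree of `e`, so it
is computed from a suitable polynomial truncation of `G`. -/
noncomputable def psubst {σ τ : Type*} [Fintype σ] [DecidableEq σ] {R : Type*} [CommRing R]
    (f : σ → MvPowerSeries τ R) (G : MvPowerSeries σ R) : MvPowerSeries τ R :=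
  fun e =>
    MvPowerSeries.coeff (R := R) e
      (MvPolynomial.eval₂ (MvPowerSeries.C (σ := τ) (R := R)) f
        ((Finset.Iic (Finsupp.equivFunOnFinite.symm fun _ : σ => e.sum fun _ n => n)).sum
          fun m => MvPolynomial.monomial m (MvPowerSeries.coeff (R := R) m G)))

/-- A one-dimensional commutative formal group law over a commutative ring `R`:
a power series `F(u,v)` with `F(u,0) = F(0,u) = u`, `F(u,v) = F(v,u)` and
`F(F(u,v),w) = F(u,F(v,w))`. -/
structure FormalGroupLaw (R : Type*) [CommRing R] where
  F : MvPowerSeries (Fin 2) R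
  zero_right : psubst ![(PowerSeries.X : PowerSeries R), 0] F = PowerSeries.X
  zero_left : psubst ![(0 : PowerSeries R), PowerSeries.X] F = PowerSeries.X
  comm : psubst ![(MvPowerSeries.X 1 : MvPowerSeries (Fin 2) R), MvPowerSeries.X 0] F = F
  assoc :
    psubst ![psubst ![(MvPowerSeries.X 0 : MvPowerSeries (Fin 3) R), MvPowerSeries.X 1] F,
        MvPowerSeries.X 2] F =
      psubst ![(MvPowerSeries.X 0 : MvPowerSeries (Fin 3) R),
        psubst ![MvPowerSeries.X 1, MvPowerSeries.X 2] F] F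

/-- `F` maps to `F'` under the ring homomorphism `φ` applied coefficientwise,
with moreover `φ` unique with this property. -/
def IsUniqueClassifyingHom {L : Type} [CommRing L] (FL : FormalGroupLaw L)
    (R : Type*) [CommRing R] (F : FormalGroupLaw R) : Prop :=
  ∃! φ : L →+* R, MvPowerSeries.map (σ := Fin 2) φ FL.F = F.F

/-! Adjoin to `ℤ` an indeterminate `a_e` for every monomial `e` in two variables and consider the
generic series `Σ a_e u^e`. A ring homomorphism `ℤ[a_e] → R` is the same thing as a power series
over `R`, namely the image of the generic series, and it factors through the quotient by the ideal
generated by the coefficients of `F(u,0) - u`, `F(0,u) - u`, `F(v,u) - F(u,v)` and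
`F(F(u,v),w) - F(u,F(v,w))` (for `F` the generic series) exactly when that image is a formal
group law. -/

section Substitution

variable {σ τ : Type*} [Fintype σ] [DecidableEq σ] {R S : Type*} [CommRing R] [CommRing S]

theorem coeff_psubst (f : σ → MvPowerSeries τ R) (G : MvPowerSeries σ R) (e : τ →₀ ℕ) :
    coeff e (psubst f G) = coeff e (MvPolynomial.eval₂ C f
      (trunc' R (Finsupp.equivFunOnFinite.symm fun _ => e.sum fun _ n => n) G)) :=
  rfl

theorem map_psubst (φ : R →+* S) (f : σ → MvPowerSeries τ R) (G : MvPowerSeries σ R) :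
    map φ (psubst f G) = psubst (map φ ∘ f) (map φ G) := by
  ext e
  rw [coeff_map, coeff_psubst, coeff_psubst, ← coeff_map, MvPolynomial.eval₂_comp_left,
    MvPowerSeries.trunc'_map, MvPolynomial.eval₂_map]
  congr 2
  exact RingHom.ext (map_C φ)

theorem map_psubst_pair (φ : R →+* S) (a b : MvPowerSeries τ R) (G : MvPowerSeries (Fin 2) R) :
    map φ (psubst ![a, b] G) = psubst ![map φ a, map φ b] (map φ G) := by
  rw [map_psubst]
  congr
  ext i
  fin_cases i <;> rfl

end Substitution

section GenericSeries

variable (σ : Type*) {R : Type*} [CommRing R]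

noncomputable def genericSeries : MvPowerSeries σ (MvPolynomial (σ →₀ ℕ) ℤ) :=
  fun e => MvPolynomial.X e

@[simp]
theorem coeff_genericSeries (e : σ →₀ ℕ) : coeff e (genericSeries σ) = MvPolynomial.X e :=
  rfl

theorem map_genericSeries_bijective :
    Function.Bijective fun ψ : MvPolynomial (σ →₀ ℕ) ℤ →+* R => map ψ (genericSeries σ) := by
  refine ⟨fun ψ ψ' h => MvPolynomial.ringHom_ext (fun n => by simp) fun e => ?_, fun G => ?_⟩
  · simpa using congrArg (coeff e) h
  · refine ⟨MvPolynomial.eval₂Hom (Int.castRingHom R) fun e => coeff e G, ?_⟩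
    ext e
    simp

end GenericSeries

section CoeffIdeal

variable {σ R S : Type*} [CommRing R] [CommRing S]

def coeffIdeal (A : MvPowerSeries σ R) : Ideal R :=
  Ideal.span (Set.range fun e => coeff e A)

theorem coeffIdeal_le_ker_iff (A : MvPowerSeries σ R) (ψ : R →+* S) :
    coeffIdeal A ≤ RingHom.ker ψ ↔ map ψ A = 0 := by
  simp [coeffIdeal, Ideal.span_le, Set.range_subset_iff, MvPowerSeries.ext_iff]

end CoeffIdeal

section Lazard

variable {R : Type*} [CommRing R]

def IsFormalGroupLaw (G : MvPowerSeries (Fin 2) R) : Prop :=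
  psubst ![(PowerSeries.X : PowerSeries R), 0] G = PowerSeries.X ∧
    psubst ![(0 : PowerSeries R), PowerSeries.X] G = PowerSeries.X ∧
    psubst ![(X 1 : MvPowerSeries (Fin 2) R), X 0] G = G ∧
    psubst ![psubst ![(X 0 : MvPowerSeries (Fin 3) R), X 1] G, X 2] G =
      psubst ![(X 0 : MvPowerSeries (Fin 3) R), psubst ![X 1, X 2] G] G

theorem FormalGroupLaw.isFormalGroupLaw (F : FormalGroupLaw R) : IsFormalGroupLaw F.F :=
  ⟨F.zero_right, F.zero_left, F.comm, F.assoc⟩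

noncomputable def lazardIdeal : Ideal (MvPolynomial (Fin 2 →₀ ℕ) ℤ) :=
  let G := genericSeries (Fin 2)
  coeffIdeal (psubst ![PowerSeries.X, 0] G - PowerSeries.X) ⊔
    coeffIdeal (psubst ![0, PowerSeries.X] G - PowerSeries.X) ⊔
    coeffIdeal (psubst ![X 1, X 0] G - G) ⊔
    coeffIdeal (psubst ![psubst ![(X 0 : MvPowerSeries (Fin 3) _), X 1] G, X 2] G -
      psubst ![X 0, psubst ![X 1, X 2] G] G)

theorem lazardIdeal_le_ker_iff (ψ : MvPolynomial (Fin 2 →₀ ℕ) ℤ →+* R) :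
    lazardIdeal ≤ RingHom.ker ψ ↔ IsFormalGroupLaw (map ψ (genericSeries (Fin 2))) := by
  have map_X_unit : map ψ (PowerSeries.X : PowerSeries _) = PowerSeries.X := PowerSeries.map_X ψ
  simp only [lazardIdeal, sup_le_iff, coeffIdeal_le_ker_iff, map_sub, map_psubst_pair, map_X,
    map_X_unit, map_zero, sub_eq_zero, and_assoc, IsFormalGroupLaw]

abbrev LazardRing : Type := MvPolynomial (Fin 2 →₀ ℕ) ℤ ⧸ lazardIdeal

noncomputable def lazardFGL : FormalGroupLaw LazardRing :=
  let h := (lazardIdeal_le_ker_iff (Ideal.Quotient.mk lazardIdeal)).1 (Ideal.mk_ker.ge)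
  { F := map (Ideal.Quotient.mk lazardIdeal) (genericSeries (Fin 2))
    zero_right := h.1
    zero_left := h.2.1
    comm := h.2.2.1
    assoc := h.2.2.2 }

theorem map_lazardFGL (φ : LazardRing →+* R) :
    map φ lazardFGL.F = map (φ.comp (Ideal.Quotient.mk lazardIdeal)) (genericSeries (Fin 2)) := by
  rw [map_comp]
  rfl

theorem map_lazardFGL_injective :
    Function.Injective fun φ : LazardRing →+* R => map φ lazardFGL.F := fun φ φ' h =>
  Ideal.Quotient.ringHom_ext <|
    (map_genericSeries_bijective (Fin 2)).1 (by simpa only [map_lazardFGL] using h)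

end Lazard

/-- Existence of the Lazard ring: there is a commutative ring `L` with a formal
group law `FL` such that for every commutative ring `R` and formal group law `F`
over `R` there is a unique ring homomorphism `L → R` carrying `FL` to `F`. -/
theorem exists_universal_formal_group_law :
    ∃ (L : Type) (instL : CommRing L) (FL : @FormalGroupLaw L instL),
      ∀ (R : Type*) (instR : CommRing R) (F : @FormalGroupLaw R instR),
        @IsUniqueClassifyingHom L instL FL R instR F := by
  refine ⟨LazardRing, inferInstance, lazardFGL, fun R _ F => ?_⟩
  obtain ⟨ψ, hψ : map ψ (genericSeries (Fin 2)) = F.F⟩ :=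
    (map_genericSeries_bijective (Fin 2)).2 F.F
  have hker : lazardIdeal ≤ RingHom.ker ψ :=
    (lazardIdeal_le_ker_iff ψ).2 (hψ ▸ F.isFormalGroupLaw)
  set φ := Ideal.Quotient.lift lazardIdeal ψ fun a ha => RingHom.mem_ker.1 (hker ha)
  have hφ : map φ lazardFGL.F = F.F := by
    rw [map_lazardFGL, Ideal.Quotient.lift_comp_mk, hψ]
  exact ⟨φ, hφ, fun φ' hφ' => map_lazardFGL_injective (hφ'.trans hφ.symm)⟩
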